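/- If P̄ ∈ A₁, then the filtration F^X̄ is immersed in F̄ under P̄: for every t ∈ I, the σ-algebra F̄_t is conditionally independent of F^X̄_T given F^X̄_t under P̄. -/

import Mathlib

open MeasureTheory ProbabilityTheory
open scoped NNReal ENNReal Topology
open Fin.NatCast

namespace LPOS

variable (T : ℕ) (E : Type*) [MeasurableSpace E]

/-- canonical path space E^I, I = {0,…,T} -/
abbrev Path := Fin (T + 1) → E

/-- canonical space Ω̄ = E^I × I -/
abbrev OmegaBar := Path T E × Fin (T + 1)

/-- the filtration F^X_t = σ(X_s : s ≤ t) on the path space -/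
def FX (t : ℕ) : MeasurableSpace (Path T E) :=
  ⨆ s : Fin (T + 1), ⨆ _ : (s : ℕ) ≤ t, MeasurableSpace.comap (fun x => x s) inferInstance

/-- the filtration F^X̄_t = σ(X̄_s : s ≤ t) on Ω̄ -/
def FXbar (t : ℕ) : MeasurableSpace (OmegaBar T E) :=
  ⨆ s : Fin (T + 1), ⨆ _ : (s : ℕ) ≤ t, MeasurableSpace.comap (fun ω => ω.1 s) inferInstance

/-- the filtration F^τ̄_t = σ({τ̄ = 0},…,{τ̄ = t}) on Ω̄ -/
def Ftau (t : ℕ) : MeasurableSpace (OmegaBar T E) :=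
  MeasurableSpace.generateFrom {A | ∃ s : Fin (T + 1), (s : ℕ) ≤ t ∧ A = {ω | ω.2 = s}}

/-- F̄_t = F^X̄_t ∨ F^τ̄_t -/
def Fbar (t : ℕ) : MeasurableSpace (OmegaBar T E) := FXbar T E t ⊔ Ftau T E t

/-- F^{X̄,P̄}_t = F^X̄_t ∨ N_{P̄}(F̄_T) -/
def FXbarP (P : Measure (OmegaBar T E)) (t : ℕ) : MeasurableSpace (OmegaBar T E) :=
  FXbar T E t ⊔ MeasurableSpace.generateFrom
    {A | ∃ C, MeasurableSet[Fbar T E T] C ∧ P C = 0 ∧ A ⊆ C}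

/-- F^{X,ν}_t = F^X_t ∨ N_ν(F^X_T) on the path space -/
def FXnu (ν : Measure (Path T E)) (t : ℕ) : MeasurableSpace (Path T E) :=
  FX T E t ⊔ MeasurableSpace.generateFrom
    {A | ∃ C, MeasurableSet[FX T E T] C ∧ ν C = 0 ∧ A ⊆ C}

/-- "under P, X̄ is a G-Markov chain with transition kernels (π_t)" -/
def IsMarkovWith (P : Measure (OmegaBar T E)) (G : ℕ → MeasurableSpace (OmegaBar T E))
    (π : ℕ → Kernel E E) : Prop :=
  ∀ t : ℕ, 1 ≤ t → t ≤ T → ∀ B : Set E, MeasurableSet B →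
    (P[Set.indicator {ω | ω.1 (t : Fin (T + 1)) ∈ B} (fun _ => (1 : ℝ)) | G (t - 1)]
      =ᵐ[P] fun ω => (π t (ω.1 ((t - 1 : ℕ) : Fin (T + 1))) B).toReal)

/-- ν is the law of the Markov chain with kernels (π_t) and initial law m₀* -/
def IsMarkovLaw (ν : Measure (Path T E)) (π : ℕ → Kernel E E) (m0 : Measure E) : Prop :=
  ν.map (fun x => x 0) = m0 ∧
  ∀ t : ℕ, 1 ≤ t → t ≤ T → ∀ B : Set E, MeasurableSet B →
    (ν[Set.indicator {x | x (t : Fin (T + 1)) ∈ B} (fun _ => (1 : ℝ)) | FX T E (t - 1)]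
      =ᵐ[ν] fun x => (π t (x ((t - 1 : ℕ) : Fin (T + 1))) B).toReal)

/-- A₀ : under P, X̄ is a (plain) Markov chain with initial law m₀* and kernels (π_t),
and τ̄ is an F^{X̄,P̄}-stopping time -/
def A0 (π : ℕ → Kernel E E) (m0 : Measure E) : Set (Measure (OmegaBar T E)) :=
  {P | IsProbabilityMeasure P ∧ P.map (fun ω => ω.1 0) = m0 ∧
    IsMarkovWith T E P (FXbar T E) π ∧
    ∀ t : ℕ, t ≤ T → MeasurableSet[FXbarP T E P t] {ω | (ω.2 : ℕ) ≤ t}}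

/-- A₁ : under P, X̄ is an F̄-Markov chain with initial law m₀* and kernels (π_t) -/
def A1 (π : ℕ → Kernel E E) (m0 : Measure E) : Set (Measure (OmegaBar T E)) :=
  {P | IsProbabilityMeasure P ∧ P.map (fun ω => ω.1 0) = m0 ∧
    IsMarkovWith T E P (Fbar T E) π}

/-- occupation measure μ^P̄_t(B) = P̄(X̄_t ∈ B, τ̄ = t) -/
noncomputable def occMu (P : Measure (OmegaBar T E)) (t : Fin (T + 1)) : Measure E :=
  (P.restrict {ω | ω.2 = t}).map (fun ω => ω.1 t)

/-- occupation measure m^P̄_t(B) = P̄(X̄_t ∈ B, t < τ̄), t ∈ I∖{T} -/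
noncomputable def occM (P : Measure (OmegaBar T E)) (t : Fin T) : Measure E :=
  (P.restrict {ω | (t : ℕ) < (ω.2 : ℕ)}).map (fun ω => ω.1 t.castSucc)

/-- the pair of families of occupation measures induced by a probability measure on Ω̄ -/
instance occMu_finite (P : Measure (OmegaBar T E)) [IsFiniteMeasure P] (t : Fin (T + 1)) :
    IsFiniteMeasure (occMu T E P t) := by
  unfold occMu; infer_instance

instance occM_finite (P : Measure (OmegaBar T E)) [IsFiniteMeasure P] (t : Fin T) :
    IsFiniteMeasure (occM T E P t) := by
  unfold occM; infer_instance

/-- the pair of families of occupation measures induced by a probability measure on Ω̄ -/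
noncomputable def occ (P : ProbabilityMeasure (OmegaBar T E)) :
    (Fin (T + 1) → FiniteMeasure E) × (Fin T → FiniteMeasure E) :=
  (fun t => ⟨occMu T E (P : Measure (OmegaBar T E)) t, inferInstance⟩,
   fun t => ⟨occM T E (P : Measure (OmegaBar T E)) t, inferInstance⟩)

/-- the linear-programming constraint set R -/
def Rset [TopologicalSpace E] (π : ℕ → Kernel E E) (m0 : Measure E) :
    Set ((Fin (T + 1) → FiniteMeasure E) × (Fin T → FiniteMeasure E)) :=
  {q | (∀ t, q.1 t Set.univ ≤ 1) ∧ (∀ t, q.2 t Set.univ ≤ 1) ∧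
    ∀ φ : ℕ → E → ℝ, (∀ t, Continuous (φ t)) →
      ∑ t : Fin (T + 1), ∫ x, φ t x ∂(q.1 t : Measure E)
        = (∫ x, φ 0 x ∂m0) +
          ∑ t : Fin T, ∫ x, ((∫ y, φ ((t : ℕ) + 1) y ∂(π ((t : ℕ) + 1) x)) - φ t x)
            ∂(q.2 t : Measure E)}

noncomputable def Mphi (π : ℕ → Kernel E E) (φ : ℕ → E → ℝ) (t : ℕ)
    (ω : OmegaBar T E) : ℝ :=
  φ t (ω.1 (t : Fin (T + 1))) -
    ∑ s ∈ Finset.range t,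
      ((∫ y, φ (s + 1) y ∂(π (s + 1) (ω.1 (s : Fin (T + 1))))) - φ s (ω.1 (s : Fin (T + 1))))

def sigmaTimes (t : ℕ) : MeasurableSpace (Fin (T + 1)) :=
  MeasurableSpace.generateFrom {S | ∃ s : Fin (T + 1), (s : ℕ) ≤ t ∧ S = {s}}

/-!
Immersion follows once we know that for `B ∈ F^X̄_T` the conditional probability `P̄(B | F̄_t)`
has an `F^X̄_t`-measurable version: then
`E[1_A 1_B | F^X̄_t] = E[1_A P̄(B | F̄_t) | F^X̄_t] = E[1_A | F^X̄_t] P̄(B | F^X̄_t)`.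
For a cylinder `B = {X̄_s ∈ B_s for all s}` the `F̄`-Markov property gives, by backward induction,
`P̄(B | F̄_t) = 1{X̄_s ∈ B_s for s ≤ t} · h(X̄_t)` with `h` obtained by iterating the kernels
`π_{t+1}, …, π_T`. Cylinders form a π-system generating `F^X̄_T`, and the property passes to the
whole σ-algebra by a Dynkin argument.
-/

section CondProb

variable {Ω : Type*} {m m' m₀ : MeasurableSpace Ω} {μ : Measure Ω}

lemma condExp_indicator_ae_eq_toReal_iff [IsFiniteMeasure μ] (hm : m ≤ m₀) {B : Set Ω}
    (hB : MeasurableSet B) {g : Ω → ℝ≥0∞} (hg : Measurable[m] g) (hg_le : ∀ᵐ ω ∂μ, g ω ≤ 1) :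
    μ[B.indicator (fun _ => (1 : ℝ)) | m] =ᵐ[μ] (fun ω => (g ω).toReal) ↔
      ∀ A, MeasurableSet[m] A → μ (A ∩ B) = ∫⁻ ω in A, g ω ∂μ := by
  have hg₀ : Measurable g := hg.mono hm le_rfl
  have hint : Integrable (B.indicator fun _ => (1 : ℝ)) μ := (integrable_const 1).indicator hB
  have hfin : ∀ A, ∫⁻ ω in A, g ω ∂μ ≠ ∞ := fun A =>
    ((lintegral_mono_ae (ae_restrict_of_ae hg_le)).trans_lt (by simp)).ne
  have hsetIntegral : ∀ A, MeasurableSet[m] A →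
      (∫ ω in A, B.indicator (fun _ => (1 : ℝ)) ω ∂μ = ∫ ω in A, (g ω).toReal ∂μ ↔
        μ (A ∩ B) = ∫⁻ ω in A, g ω ∂μ) := fun A _ => by
    rw [integral_indicator_const _ hB, measureReal_restrict_apply hB, smul_eq_mul, mul_one,
      integral_toReal hg₀.aemeasurable (ae_restrict_of_ae (hg_le.mono fun _ h => h.trans_lt
        ENNReal.one_lt_top)), Set.inter_comm, measureReal_def,
      ENNReal.toReal_eq_toReal_iff' (measure_ne_top _ _) (hfin A)]
  constructor
  · intro h A hA
    rw [← hsetIntegral A hA, ← setIntegral_condExp hm hint hA]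
    exact setIntegral_congr_ae (hm A hA) (h.mono fun _ h _ => h)
  · intro h
    refine (ae_eq_condExp_of_forall_setIntegral_eq hm hint (fun A _ _ => ?_)
      (fun A hA _ => ((hsetIntegral A hA).2 (h A hA)).symm)
      hg.ennreal_toReal.stronglyMeasurable.aestronglyMeasurable).symm
    refine ((integrable_const (1 : ℝ)).mono' hg₀.ennreal_toReal.aestronglyMeasurable
      (hg_le.mono fun ω h => ?_)).integrableOn
    rw [Real.norm_of_nonneg ENNReal.toReal_nonneg]
    exact ENNReal.toReal_le_of_le_ofReal zero_le_one (by simpa using h)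

lemma ae_le_one_of_setLIntegral_le [IsFiniteMeasure μ] (hm : m ≤ m₀) {g : Ω → ℝ≥0∞}
    (hg : Measurable[m] g) (h : ∀ A, MeasurableSet[m] A → ∫⁻ ω in A, g ω ∂μ ≤ μ A) :
    ∀ᵐ ω ∂μ, g ω ≤ 1 := by
  refine ae_of_ae_trim hm (ae_le_of_forall_setLIntegral_le_of_sigmaFinite hg fun A hA _ => ?_)
  rw [setLIntegral_trim hm hg hA, setLIntegral_trim hm measurable_const hA, setLIntegral_one]
  exact h A hA

/-- The conditional probability of `B` given `m'` has an `m`-measurable version. -/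
def HasMeasurableCondProb {m₀ : MeasurableSpace Ω} (m m' : MeasurableSpace Ω)
    (μ : Measure[m₀] Ω) (B : Set Ω) : Prop :=
  ∃ g : Ω → ℝ≥0∞, Measurable[m] g ∧ ∀ A, MeasurableSet[m'] A → μ (A ∩ B) = ∫⁻ ω in A, g ω ∂μ

namespace HasMeasurableCondProb

variable {B : Set Ω}

lemma empty : HasMeasurableCondProb m m' μ ∅ :=
  ⟨0, measurable_const, fun A _ => by simp⟩

lemma ae_le_one [IsFiniteMeasure μ] (hmm' : m ≤ m') (hm' : m' ≤ m₀) {g : Ω → ℝ≥0∞}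
    (hg : Measurable[m] g) (hgB : ∀ A, MeasurableSet[m'] A → μ (A ∩ B) = ∫⁻ ω in A, g ω ∂μ) :
    ∀ᵐ ω ∂μ, g ω ≤ 1 :=
  ae_le_one_of_setLIntegral_le (hmm'.trans hm') hg fun A hA =>
    (hgB A (hmm' A hA)).symm.trans_le (measure_mono Set.inter_subset_left)

lemma compl [IsFiniteMeasure μ] (hmm' : m ≤ m') (hm' : m' ≤ m₀) (hB : MeasurableSet B)
    (h : HasMeasurableCondProb m m' μ B) : HasMeasurableCondProb m m' μ Bᶜ := by
  obtain ⟨g, hg, hgB⟩ := h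
  refine ⟨fun ω => 1 - g ω, measurable_const.sub hg, fun A hA => ?_⟩
  rw [← Set.sdiff_eq, ← Set.sdiff_self_inter, measure_sdiff Set.inter_subset_left
      ((hm' A hA).inter hB).nullMeasurableSet (measure_ne_top _ _), hgB A hA,
    lintegral_sub (hg.mono (hmm'.trans hm') le_rfl) ((hgB A hA).symm ▸ measure_ne_top _ _)
      (ae_restrict_of_ae (ae_le_one hmm' hm' hg hgB)), setLIntegral_one]

lemma iUnion (hmm' : m ≤ m') (hm' : m' ≤ m₀) {B : ℕ → Set Ω} (hB : ∀ n, MeasurableSet (B n))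
    (hdisj : Pairwise (Function.onFun Disjoint B)) (h : ∀ n, HasMeasurableCondProb m m' μ (B n)) :
    HasMeasurableCondProb m m' μ (⋃ n, B n) := by
  choose g hg hgB using h
  refine ⟨fun ω => ∑' n, g n ω, by let := m; exact Measurable.tsum hg, fun A hA => ?_⟩
  rw [Set.inter_iUnion, measure_iUnion (hdisj.mono fun _ _ h => h.mono Set.inter_subset_right
      Set.inter_subset_right) fun n => (hm' A hA).inter (hB n),
    lintegral_tsum fun n => ((hg n).mono (hmm'.trans hm') le_rfl).aemeasurable]
  exact tsum_congr fun n => hgB n A hA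

lemma of_isPiSystem [IsFiniteMeasure μ] (hmm' : m ≤ m') (hm' : m' ≤ m₀)
    {mB : MeasurableSpace Ω} (hmB : mB ≤ m₀) {C : Set (Set Ω)} (hC : mB = .generateFrom C)
    (hCpi : IsPiSystem C) (hCprob : ∀ B ∈ C, HasMeasurableCondProb m m' μ B)
    (hB : MeasurableSet[mB] B) : HasMeasurableCondProb m m' μ B := by
  induction B, hB using MeasurableSpace.induction_on_inter hC hCpi with
  | empty => exact empty
  | basic B hB => exact hCprob B hB
  | compl B hB ih => exact ih.compl hmm' hm' (hmB B hB)
  | iUnion B hdisj hB ih => exact iUnion hmm' hm' (fun n => hmB _ (hB n)) hdisj ih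

lemma aestronglyMeasurable_condExp [IsFiniteMeasure μ] (hmm' : m ≤ m') (hm' : m' ≤ m₀)
    (hB : MeasurableSet B) (h : HasMeasurableCondProb m m' μ B) :
    AEStronglyMeasurable[m] (μ[B.indicator (fun _ => (1 : ℝ)) | m']) μ := by
  obtain ⟨g, hg, hgB⟩ := h
  have hcond := (condExp_indicator_ae_eq_toReal_iff hm' hB (hg.mono hmm' le_rfl)
    (ae_le_one hmm' hm' hg hgB)).2 hgB
  exact hg.ennreal_toReal.stronglyMeasurable.aestronglyMeasurable.congr hcond.symm

end HasMeasurableCondProb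

lemma condExp_indicator_ae_eq_mul [IsFiniteMeasure μ] (hmm' : m ≤ m') (hm' : m' ≤ m₀)
    {f : Ω → ℝ} (hf : Integrable f μ) (hfm : AEStronglyMeasurable[m] (μ[f | m']) μ)
    {A : Set Ω} (hA : MeasurableSet[m'] A) :
    μ[A.indicator f | m] =ᵐ[μ] μ[A.indicator (fun _ => (1 : ℝ)) | m] * μ[f | m] := by
  have hf_eq : μ[f | m'] =ᵐ[μ] μ[f | m] :=
    (condExp_of_aestronglyMeasurable' (hmm'.trans hm') hfm integrable_condExp).symm.trans
      (condExp_condExp_of_le hmm' hm')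
  have hAf : A.indicator (μ[f | m]) = A.indicator (fun _ => (1 : ℝ)) * μ[f | m] := by
    ext ω; by_cases hω : ω ∈ A <;> simp [hω]
  calc μ[A.indicator f | m]
      =ᵐ[μ] μ[μ[A.indicator f | m'] | m] := (condExp_condExp_of_le hmm' hm').symm
    _ =ᵐ[μ] μ[A.indicator (μ[f | m]) | m] :=
        condExp_congr_ae ((condExp_indicator hf hA).trans (hf_eq.mono fun ω h => by
          simp only [Set.indicator, h]))
    _ =ᵐ[μ] μ[A.indicator (fun _ => (1 : ℝ)) | m] * μ[f | m] := by
        rw [hAf]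
        exact condExp_mul_of_stronglyMeasurable_right stronglyMeasurable_condExp
          (hAf ▸ integrable_condExp.indicator (hm' A hA))
          ((integrable_const 1).indicator (hm' A hA))

end CondProb

section MarkovChain

variable {T E}

lemma measurable_coord (s : Fin (T + 1)) : Measurable (fun ω : OmegaBar T E => ω.1 s) :=
  (measurable_pi_apply s).comp measurable_fst

lemma measurable_coord_FXbar {s : Fin (T + 1)} {t : ℕ} (hst : (s : ℕ) ≤ t) :
    Measurable[FXbar T E t] (fun ω : OmegaBar T E => ω.1 s) :=
  measurable_iff_comap_le.2 <| le_iSup₂ (f := fun (u : Fin (T + 1)) (_ : (u : ℕ) ≤ t) =>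
    MeasurableSpace.comap (fun ω : OmegaBar T E => ω.1 u) inferInstance) s hst

lemma measurable_coord_natCast_FXbar (t : ℕ) :
    Measurable[FXbar T E t] (fun ω : OmegaBar T E => ω.1 (t : Fin (T + 1))) :=
  measurable_coord_FXbar (by rw [Fin.val_natCast]; exact Nat.mod_le _ _)

lemma FXbar_le (t : ℕ) : FXbar T E t ≤ (inferInstance : MeasurableSpace (OmegaBar T E)) :=
  iSup₂_le fun s _ => (measurable_coord s).comap_le

lemma FXbar_le_Fbar (t : ℕ) : FXbar T E t ≤ Fbar T E t := le_sup_left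

lemma Fbar_le (t : ℕ) : Fbar T E t ≤ (inferInstance : MeasurableSpace (OmegaBar T E)) :=
  sup_le (FXbar_le t) <| MeasurableSpace.generateFrom_le <| by
    rintro _ ⟨s, -, rfl⟩
    exact measurable_snd (measurableSet_singleton s)

lemma Fbar_mono {s t : ℕ} (hst : s ≤ t) : Fbar T E s ≤ Fbar T E t :=
  sup_le_sup (iSup₂_le fun u hu => le_iSup₂_of_le (f := fun (u : Fin (T + 1)) (_ : (u : ℕ) ≤ t) =>
      MeasurableSpace.comap (fun ω : OmegaBar T E => ω.1 u) inferInstance) u (hu.trans hst) le_rfl)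
    (MeasurableSpace.generateFrom_mono fun _ ⟨u, hu, h⟩ => ⟨u, hu.trans hst, h⟩)

lemma FXbar_last :
    FXbar T E T =
      MeasurableSpace.comap (Prod.fst : OmegaBar T E → Path T E) MeasurableSpace.pi := by
  simp only [MeasurableSpace.pi, MeasurableSpace.comap_iSup, MeasurableSpace.comap_comp]
  exact iSup_congr fun s => by rw [iSup_pos (Nat.lt_succ_iff.mp s.isLt)]; rfl

variable {P : Measure (OmegaBar T E)} [IsFiniteMeasure P] {π : ℕ → Kernel E E}

/-- `tailProb π Bs k x` is the probability that the chain started from `x` at time `T - k`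
visits `Bs v` at every time `T - k < v ≤ T`. -/
noncomputable def tailProb (π : ℕ → Kernel E E) (Bs : Fin (T + 1) → Set E) : ℕ → E → ℝ≥0∞
  | 0 => fun _ => 1
  | k + 1 => fun x => ∫⁻ y, (Bs ((T - k : ℕ) : Fin (T + 1))).indicator (tailProb π Bs k) y
      ∂(π (T - k) x)

def tailCylinder (Bs : Fin (T + 1) → Set E) (u : ℕ) : Set (OmegaBar T E) :=
  {ω | ∀ v : ℕ, u < v → v ≤ T → ω.1 (v : Fin (T + 1)) ∈ Bs (v : Fin (T + 1))}

lemma measurable_tailProb {Bs : Fin (T + 1) → Set E} (hBs : ∀ s, MeasurableSet (Bs s)) :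
    ∀ k, Measurable (tailProb π Bs k)
  | 0 => measurable_const
  | k + 1 => ((measurable_tailProb hBs k).indicator (hBs _)).lintegral_kernel

variable [∀ t, IsMarkovKernel (π t)]

lemma measure_inter_coord_succ (hM : IsMarkovWith T E P (Fbar T E) π) {t : ℕ} (ht : t + 1 ≤ T)
    {S : Set E} (hS : MeasurableSet S) {A : Set (OmegaBar T E)} (hA : MeasurableSet[Fbar T E t] A) :
    P (A ∩ {ω | ω.1 ((t + 1 : ℕ) : Fin (T + 1)) ∈ S})
      = ∫⁻ ω in A, π (t + 1) (ω.1 (t : Fin (T + 1))) S ∂P := by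
  have hcond := hM (t + 1) (Nat.le_add_left 1 t) ht S hS
  rw [Nat.add_sub_cancel] at hcond
  have hkernel : Measurable[Fbar T E t] fun ω : OmegaBar T E => π (t + 1) (ω.1 t) S :=
    ((π (t + 1)).measurable_coe hS).comp
      ((measurable_coord_natCast_FXbar t).mono (FXbar_le_Fbar t) le_rfl)
  exact (condExp_indicator_ae_eq_toReal_iff (Fbar_le t) (measurable_coord _ hS) hkernel
    (ae_of_all _ fun _ => prob_le_one)).1 hcond A hA

lemma map_restrict_coord_succ (hM : IsMarkovWith T E P (Fbar T E) π) {t : ℕ} (ht : t + 1 ≤ T)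
    {A : Set (OmegaBar T E)} (hA : MeasurableSet[Fbar T E t] A) :
    (P.restrict A).map (fun ω => ω.1 ((t + 1 : ℕ) : Fin (T + 1)))
      = π (t + 1) ∘ₘ (P.restrict A).map (fun ω => ω.1 (t : Fin (T + 1))) := by
  ext S hS
  rw [Measure.map_apply (measurable_coord _) hS, Measure.restrict_apply (measurable_coord _ hS),
    Measure.bind_apply hS (π (t + 1)).measurable.aemeasurable,
    lintegral_map ((π (t + 1)).measurable_coe hS) (measurable_coord _), Set.inter_comm]
  exact measure_inter_coord_succ hM ht hS hA

lemma setLIntegral_coord_succ (hM : IsMarkovWith T E P (Fbar T E) π) {t : ℕ} (ht : t + 1 ≤ T)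
    {A : Set (OmegaBar T E)} (hA : MeasurableSet[Fbar T E t] A) {f : E → ℝ≥0∞}
    (hf : Measurable f) :
    ∫⁻ ω in A, f (ω.1 ((t + 1 : ℕ) : Fin (T + 1))) ∂P
      = ∫⁻ ω in A, ∫⁻ y, f y ∂(π (t + 1) (ω.1 (t : Fin (T + 1)))) ∂P := by
  rw [← lintegral_map hf (measurable_coord _), map_restrict_coord_succ hM ht hA,
    Measure.lintegral_bind (π (t + 1)).measurable.aemeasurable hf.aemeasurable,
    lintegral_map hf.lintegral_kernel (measurable_coord _)]

lemma measure_inter_tailCylinder (hM : IsMarkovWith T E P (Fbar T E) π)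
    {Bs : Fin (T + 1) → Set E} (hBs : ∀ s, MeasurableSet (Bs s)) (k : ℕ) :
    ∀ u, u + k = T → ∀ A, MeasurableSet[Fbar T E u] A →
      P (A ∩ tailCylinder Bs u) = ∫⁻ ω in A, tailProb π Bs k (ω.1 (u : Fin (T + 1))) ∂P := by
  induction k with
  | zero =>
    intro u hu A _
    have : tailCylinder Bs u = Set.univ := by
      ext; simp only [tailCylinder, Set.mem_ofPred_eq, Set.mem_univ, iff_true]; omega
    rw [this, Set.inter_univ, tailProb, setLIntegral_one]
  | succ k ih =>
    intro u hu A hA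
    set S := {ω : OmegaBar T E | ω.1 ((u + 1 : ℕ) : Fin (T + 1)) ∈ Bs ((u + 1 : ℕ) : Fin (T + 1))}
    have hcyl : tailCylinder Bs u = S ∩ tailCylinder Bs (u + 1) := by
      ext ω
      simp only [S, tailCylinder, Set.mem_inter_iff, Set.mem_ofPred_eq]
      refine ⟨fun h => ⟨h (u + 1) u.lt_succ_self (by omega), fun v hv hvT => h v (by omega) hvT⟩,
        ?_⟩
      rintro ⟨hsucc, htail⟩ v hv hvT
      rcases (Nat.succ_le_of_lt hv).eq_or_lt with rfl | hv'
      exacts [hsucc, htail v hv' hvT]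
    have hS : MeasurableSet[Fbar T E (u + 1)] S :=
      FXbar_le_Fbar _ _ (measurable_coord_natCast_FXbar _ (hBs _))
    rw [hcyl, ← Set.inter_assoc,
      ih (u + 1) (by omega) _ ((Fbar_mono (Nat.le_succ u) _ hA).inter hS), Set.inter_comm,
      ← setLIntegral_indicator (Fbar_le _ _ hS)]
    have hind : ∀ ω, S.indicator (fun ω => tailProb π Bs k (ω.1 ((u + 1 : ℕ) : Fin (T + 1)))) ω
        = (Bs ((u + 1 : ℕ) : Fin (T + 1))).indicator (tailProb π Bs k)
            (ω.1 ((u + 1 : ℕ) : Fin (T + 1))) := fun ω =>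
      Set.indicator_comp_right (fun ω : OmegaBar T E => ω.1 ((u + 1 : ℕ) : Fin (T + 1)))
    have hTk : T - k = u + 1 := by omega
    rw [lintegral_congr hind,
      setLIntegral_coord_succ hM (by omega) hA ((measurable_tailProb hBs k).indicator (hBs _))]
    simp only [tailProb, hTk]

lemma hasMeasurableCondProb_cylinder (hM : IsMarkovWith T E P (Fbar T E) π) {t : ℕ} (ht : t ≤ T)
    {Bs : Fin (T + 1) → Set E} (hBs : ∀ s, MeasurableSet (Bs s)) :
    HasMeasurableCondProb (FXbar T E t) (Fbar T E t) P (Prod.fst ⁻¹' Set.univ.pi Bs) := by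
  set past := ⋂ (s : Fin (T + 1)) (_ : (s : ℕ) ≤ t), (fun ω : OmegaBar T E => ω.1 s) ⁻¹' Bs s
  have hpast : MeasurableSet[FXbar T E t] past :=
    .iInter fun s => .iInter fun hs => measurable_coord_FXbar hs (hBs s)
  have hsplit : Prod.fst ⁻¹' Set.univ.pi Bs = past ∩ tailCylinder Bs t := by
    ext ω
    simp only [past, tailCylinder, Set.mem_preimage, Set.mem_univ_pi, Set.mem_inter_iff,
      Set.mem_iInter, Set.mem_ofPred_eq]
    refine ⟨fun h => ⟨fun s _ => h s, fun v _ _ => h _⟩, fun ⟨hle, hgt⟩ s => ?_⟩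
    by_cases hs : (s : ℕ) ≤ t
    · exact hle s hs
    · simpa using hgt s (by omega) (by omega)
  refine ⟨past.indicator fun ω => tailProb π Bs (T - t) (ω.1 (t : Fin (T + 1))),
    ((measurable_tailProb hBs _).comp (measurable_coord_natCast_FXbar t)).indicator hpast,
    fun A hA => ?_⟩
  rw [hsplit, ← Set.inter_assoc, measure_inter_tailCylinder hM hBs (T - t) t (by omega) _
      (hA.inter (FXbar_le_Fbar t _ hpast)), setLIntegral_indicator (FXbar_le t _ hpast),
    Set.inter_comm]

lemma hasMeasurableCondProb_of_FXbar_last (hM : IsMarkovWith T E P (Fbar T E) π) {t : ℕ}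
    (ht : t ≤ T) {B : Set (OmegaBar T E)} (hB : MeasurableSet[FXbar T E T] B) :
    HasMeasurableCondProb (FXbar T E t) (Fbar T E t) P B := by
  refine HasMeasurableCondProb.of_isPiSystem (FXbar_le_Fbar t) (Fbar_le t) (FXbar_le T)
    (C := Set.preimage Prod.fst '' (Set.univ.pi '' Set.univ.pi fun _ => {s | MeasurableSet s}))
    ?_ (isPiSystem_pi.comap Prod.fst) ?_ hB
  · rw [FXbar_last, ← generateFrom_pi, MeasurableSpace.comap_generateFrom]
  · rintro _ ⟨_, ⟨Bs, hBs, rfl⟩, rfl⟩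
    exact hasMeasurableCondProb_cylinder hM ht fun s => hBs s (Set.mem_univ s)

end MarkovChain

section Thms

variable [MetricSpace E] [CompactSpace E] [Nonempty E] [BorelSpace E]
    [SecondCountableTopology E]

theorem stmt_10
    (π : ℕ → Kernel E E) [∀ t, IsMarkovKernel (π t)]
    (m0 : Measure E)
    (P : Measure (OmegaBar T E)) (hP : P ∈ A1 T E π m0) :
    ∀ t : ℕ, t ≤ T →
      ∀ A : Set (OmegaBar T E), MeasurableSet[Fbar T E t] A →
      ∀ B : Set (OmegaBar T E), MeasurableSet[FXbar T E T] B →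
        (P[Set.indicator (A ∩ B) (fun _ => (1 : ℝ)) | FXbar T E t]
          =ᵐ[P] fun ω =>
            (P[Set.indicator A (fun _ => (1 : ℝ)) | FXbar T E t]) ω *
            (P[Set.indicator B (fun _ => (1 : ℝ)) | FXbar T E t]) ω) := by
  obtain ⟨hprob, -, hM⟩ := hP
  intro t ht A hA B hB
  have hB' : MeasurableSet B := FXbar_le T B hB
  rw [← Set.indicator_indicator]
  exact condExp_indicator_ae_eq_mul (FXbar_le_Fbar t) (Fbar_le t)
    ((integrable_const 1).indicator hB')
    ((hasMeasurableCondProb_of_FXbar_last hM ht hB).aestronglyMeasurable_condExp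
      (FXbar_le_Fbar t) (Fbar_le t) hB') hA

end Thms
end LPOS
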